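/- (Corollary 3.1, DEIM, spectral-norm part.) Let V ∈ ℝ^{n×r} have orthonormal columns with 1 ≤ r ≤ n. Then Σ_j w(j) · ‖(Vᵀ E_J)⁻¹‖₂² ≤ r(n − r) + 1, where ‖·‖₂ is the spectral norm (ℓ²→ℓ² operator norm), the sum runs over all sequences j = (j_1,…,j_r) ∈ {1,…,n}^r, and a summand with w(j) = 0 is interpreted as 0 (whenever w(j) > 0 the matrix VᵀE_J is invertible). That is, the index set I selected by Adaptive Randomized Pivoting applied to V satisfies E[‖(E_IᵀV)⁻¹‖₂²] ≤ r(n − r) + 1. -/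

import Mathlib

open Matrix BigOperators

/-- One step of the ARP recursion: project out the `i`-th row of `W`
(convention: leave `W` unchanged if that row is zero). -/
noncomputable def arpStep {n r : ℕ} (W : Matrix (Fin n) (Fin r) ℝ) (i : Fin n) :
    Matrix (Fin n) (Fin r) ℝ :=
  if W i = 0 then W
  else W * (1 - (∑ l, (W i l) ^ 2)⁻¹ • Matrix.of fun a b => W i a * W i b)

/-- The ARP iterates `V_k`. -/
noncomputable def arpIter {n r : ℕ} (V : Matrix (Fin n) (Fin r) ℝ) (j : Fin r → Fin n) :
    ℕ → Matrix (Fin n) (Fin r) ℝ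
  | 0 => V
  | k + 1 => if h : k < r then arpStep (arpIter V j k) (j ⟨k, h⟩) else arpIter V j k

/-- The ARP weight `w(j) = ∏_{k=1}^r ‖v_k‖²/(r-k+1)`. -/
noncomputable def arpWeight {n r : ℕ} (V : Matrix (Fin n) (Fin r) ℝ) (j : Fin r → Fin n) : ℝ :=
  ∏ k : Fin r, (∑ l, (arpIter V j k.val (j k) l) ^ 2) / ((r : ℝ) - (k.val : ℝ))

/-- The matrix `E_J` whose `k`-th column is the `j_k`-th standard basis vector of ℝⁿ. -/
def EJ {n k : ℕ} (j : Fin k → Fin n) : Matrix (Fin n) (Fin k) ℝ :=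
  Matrix.of fun i l => if i = j l then 1 else 0

/-- Squared Frobenius norm. -/
def frobSq {m n : ℕ} (A : Matrix (Fin m) (Fin n) ℝ) : ℝ := ∑ i, ∑ j, (A i j) ^ 2

/-- Spectral norm (ℓ²→ℓ² operator norm). -/
noncomputable def specNorm {r : ℕ} (M : Matrix (Fin r) (Fin r) ℝ) : ℝ :=
  ‖Matrix.toEuclideanCLM (𝕜 := ℝ) M‖

/-!
ARP is volume sampling: the pivot rows `v_k` are a Gram–Schmidt orthogonalisation of the
selected rows of `V`, so `w(j) = det(Vᵀ E_J)² / r!`. Since `‖Vᵀ E_J‖₂ ≤ 1`, all singular values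
of `A = Vᵀ E_J` are at most `1`, hence `‖A⁻¹‖₂² ≤ ‖A⁻¹‖_F² - (r - 1)`. Finally
`det(A)² ‖A⁻¹‖_F² = ‖adj A‖_F²` is a sum of `(r - 1)`-minors of the projection `V Vᵀ`, and
Cauchy–Binet evaluates their sum over all `j` as `r! · r (n - r + 1)`.
-/

open scoped Matrix.Norms.L2Operator

namespace Matrix

variable {R : Type*} [CommRing R] {κ ι : Type*} [Fintype κ] [DecidableEq κ]

theorem det_submatrix_eq_zero_of_not_injective {ι' : Type*} (M : Matrix ι ι' R) {c : κ → ι}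
    (hc : ¬ Function.Injective c) (e : κ → ι') : (M.submatrix c e).det = 0 := by
  obtain ⟨a, b, hab, hne⟩ : ∃ a b, c a = c b ∧ a ≠ b := by
    simpa [Function.Injective] using hc
  exact det_zero_of_row_eq hne (by ext; simp [hab])

theorem det_one_submatrix [DecidableEq ι] (c : κ → ι) :
    ((1 : Matrix ι ι R).submatrix c c).det = if Function.Injective c then 1 else 0 := by
  split_ifs with hc
  · rw [submatrix_one c hc, det_one]
  · exact det_submatrix_eq_zero_of_not_injective 1 hc c

theorem det_eq_of_rows_eq_add_sum_smul_lt [LinearOrder κ] {B W : Matrix κ κ R}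
    (h : ∀ k, ∃ g : κ → R, (∀ k', k ≤ k' → g k' = 0) ∧ B k = W k + ∑ k', g k' • W k') :
    B.det = W.det := by
  choose g hg0 hg using h
  have hB : B = (1 + of g) * W := by
    ext k c
    simp [add_mul, hg k, mul_apply, Finset.sum_apply, Finset.sum_add_distrib, one_apply]
  have hL : (1 + of g).det = 1 := by
    rw [det_of_isLowerTriangular _ fun k k' hkk' => ?_]
    · exact Finset.prod_eq_one fun k _ => by simp [hg0 k k le_rfl]
    · have hlt : k < k' := hkk'
      simp [hlt.ne, hg0 k k' hlt.le]
  rw [hB, det_mul, hL, one_mul]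

theorem det_sq_eq_prod_dotProduct_self {W : Matrix κ κ R}
    (h : Pairwise fun k k' => W k ⬝ᵥ W k' = 0) : W.det ^ 2 = ∏ k, W k ⬝ᵥ W k := by
  have hWW : W * Wᵀ = diagonal fun k => W k ⬝ᵥ W k := by
    ext k k'
    rcases eq_or_ne k k' with rfl | hne
    · simp [mul_apply, dotProduct]
    · simp [mul_apply, dotProduct, hne, ← h hne]
  rw [sq]
  nth_rw 2 [← det_transpose W]
  rw [← det_mul, hWW, det_diagonal]

variable [Fintype ι]

theorem det_mul_eq_sum_prod_mul_det_submatrix (A : Matrix κ ι R) (B : Matrix ι κ R) :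
    (A * B).det = ∑ c : κ → ι, (∏ i, A i (c i)) * (B.submatrix c id).det := by
  have h := (detRowAlternating : (κ → R) [⋀^κ]→ₗ[R] R).toMultilinearMap.map_sum
    (fun (i : κ) (k : ι) => A i k • B k)
  have hrows : (fun i => ∑ k, A i k • B k) = A * B := by
    ext i l
    simp [mul_apply, Finset.sum_apply]
  simp only [hrows, AlternatingMap.coe_multilinearMap] at h
  rw [det, h]
  exact Finset.sum_congr rfl fun c _ =>
    (detRowAlternating : (κ → R) [⋀^κ]→ₗ[R] R).map_smul_univ _ _

/-- The Cauchy–Binet formula, summed over sequences rather than subsets of indices. -/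
theorem sum_det_submatrix_mul_det_submatrix (A : Matrix κ ι R) (B : Matrix ι κ R) :
    ∑ c : κ → ι, (A.submatrix id c).det * (B.submatrix c id).det
      = (Fintype.card κ).factorial * (A * B).det := by
  have hperm (σ : Equiv.Perm κ) :
      ∑ c : κ → ι, (∏ i, A (σ i) (c i)) * (B.submatrix c id).det
        = Equiv.Perm.sign σ * (A * B).det := by
    rw [det_mul_eq_sum_prod_mul_det_submatrix, Finset.mul_sum,
      ← (Equiv.arrowCongr σ.symm (Equiv.refl ι)).sum_comp]
    refine Finset.sum_congr rfl fun c _ => ?_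
    have hc : Equiv.arrowCongr σ.symm (Equiv.refl ι) c = c ∘ σ := rfl
    have hA : ∏ i, A (σ i) (c (σ i)) = ∏ i, A i (c i) := Equiv.prod_comp σ (fun i => A i (c i))
    rw [hc, show B.submatrix (c ∘ σ) id = (B.submatrix c id).submatrix σ id from rfl, det_permute]
    simp only [Function.comp_apply, hA]
    ring
  calc ∑ c : κ → ι, (A.submatrix id c).det * (B.submatrix c id).det
      = ∑ σ : Equiv.Perm κ, Equiv.Perm.sign σ *
          ∑ c : κ → ι, (∏ i, A (σ i) (c i)) * (B.submatrix c id).det := by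
        simp_rw [det_apply', Finset.sum_mul, Finset.mul_sum, mul_assoc]
        exact Finset.sum_comm
    _ = ∑ _σ : Equiv.Perm κ, (A * B).det := by
        refine Finset.sum_congr rfl fun σ _ => ?_
        rw [hperm, ← mul_assoc, ← Int.cast_mul, ← Units.val_mul, Int.units_mul_self, Units.val_one,
          Int.cast_one, one_mul]
    _ = (Fintype.card κ).factorial * (A * B).det := by
        rw [Finset.sum_const, Finset.card_univ, Fintype.card_perm, nsmul_eq_mul]

theorem sum_det_one_submatrix [DecidableEq ι] :
    ∑ c : κ → ι, ((1 : Matrix ι ι R).submatrix c c).det = Fintype.card (κ ↪ ι) := by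
  simp only [det_one_submatrix, Finset.sum_boole]
  rw [← Fintype.card_subtype, Fintype.card_congr (Equiv.subtypeInjectiveEquivEmbedding κ ι)]

theorem sum_det_submatrix_mul_transpose {K : Type*} [Field K] [CharZero K] {ρ : Type*}
    [Fintype ρ] [DecidableEq ρ] (V : Matrix ι ρ K) (hV : Vᵀ * V = 1) :
    ∑ c : κ → ι, ((V * Vᵀ).submatrix c c).det = Fintype.card (κ ↪ ρ) := by
  have hfact : ((Fintype.card κ).factorial : K) ≠ 0 :=
    Nat.cast_ne_zero.mpr (Nat.factorial_ne_zero _)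
  refine mul_left_cancel₀ hfact ?_
  calc ((Fintype.card κ).factorial : K) * ∑ c : κ → ι, ((V * Vᵀ).submatrix c c).det
      = ∑ c : κ → ι, ∑ d : κ → ρ, (V.submatrix c d).det * (Vᵀ.submatrix d c).det := by
        rw [Finset.mul_sum]
        refine Finset.sum_congr rfl fun c _ => ?_
        rw [submatrix_mul _ _ c id c Function.bijective_id,
          ← sum_det_submatrix_mul_det_submatrix]
        simp only [submatrix_submatrix, Function.comp_id, Function.id_comp]
    _ = ∑ d : κ → ρ, ∑ c : κ → ι, (Vᵀ.submatrix d c).det * (V.submatrix c d).det := by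
        rw [Finset.sum_comm]
        simp only [mul_comm]
    _ = ∑ d : κ → ρ, ((Fintype.card κ).factorial : K) * ((Vᵀ * V).submatrix d d).det := by
        refine Finset.sum_congr rfl fun d _ => ?_
        rw [submatrix_mul _ _ d id d Function.bijective_id,
          ← sum_det_submatrix_mul_det_submatrix]
        simp only [submatrix_submatrix, Function.comp_id, Function.id_comp]
    _ = ((Fintype.card κ).factorial : K) * Fintype.card (κ ↪ ρ) := by
        rw [hV, ← Finset.mul_sum, sum_det_one_submatrix]

open scoped MatrixOrder in
theorem PosSemidef.exists_eq_transpose_mul_self {A : Matrix κ κ ℝ} (hA : A.PosSemidef) :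
    ∃ B : Matrix κ κ ℝ, A = Bᵀ * B := by
  obtain ⟨B, hB⟩ := CStarAlgebra.nonneg_iff_eq_star_mul_self.mp hA.nonneg
  exact ⟨B, by simpa [star_eq_conjTranspose] using hB⟩

theorem l2_opNorm_one_le : ‖(1 : Matrix κ κ ℝ)‖ ≤ 1 := by
  rw [← diagonal_one, l2_opNorm_diagonal]
  exact pi_norm_le_iff_of_nonneg zero_le_one |>.mpr fun _ => by simp

theorem l2_opNorm_le_one_of_transpose_mul_self_eq_one {A : Matrix ι κ ℝ} (hA : Aᵀ * A = 1) :
    ‖A‖ ≤ 1 := by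
  have h := l2_opNorm_conjTranspose_mul_self A
  rw [conjTranspose_eq_transpose_of_trivial, hA] at h
  nlinarith [l2_opNorm_one_le (κ := κ), norm_nonneg A]

theorem mulVec_dotProduct_mulVec_self_le (A : Matrix ι κ ℝ) (x : κ → ℝ) :
    (A *ᵥ x) ⬝ᵥ (A *ᵥ x) ≤ ‖A‖ ^ 2 * (x ⬝ᵥ x) := by
  have h := pow_le_pow_left₀ (norm_nonneg _) (l2_opNorm_mulVec A (WithLp.toLp 2 x)) 2
  simp only [EuclideanSpace.real_norm_sq_eq, mul_pow] at h
  simpa [dotProduct, sq] using h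

end Matrix

theorem Fin.insertNth_injective_iff {α : Type*} {m : ℕ} {l : Fin (m + 1)} {a : α}
    {c : Fin m → α} :
    Function.Injective (Fin.insertNth l a c) ↔ a ∉ Set.range c ∧ Function.Injective c := by
  constructor
  · intro h
    refine ⟨fun ⟨i, hi⟩ => Fin.succAbove_ne l i (h ?_), fun i i' hii' => ?_⟩
    · simp [hi]
    · exact l.succAbove_right_injective (h (by simpa using hii'))
  · rintro ⟨ha, hc⟩ x y hxy
    induction x using Fin.succAboveCases l <;> induction y using Fin.succAboveCases l <;>
      simp_all [eq_comm, hc.eq_iff]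

theorem sum_ite_injective_comp_succAbove {m n : ℕ} (l : Fin (m + 1)) (D : (Fin m → Fin n) → ℝ)
    (hD : ∀ c, ¬ Function.Injective c → D c = 0) :
    ∑ j : Fin (m + 1) → Fin n, (if Function.Injective j then D (j ∘ l.succAbove) else 0)
      = ((n : ℝ) - m) * ∑ c, D c := by
  have hcount (c : Fin m → Fin n) (hc : Function.Injective c) :
      ∑ a : Fin n, (if a ∉ Set.range c then (1 : ℝ) else 0) = (n : ℝ) - m := by
    have hmn : m ≤ n := by simpa using Fintype.card_le_of_injective c hc
    have hcompl : Finset.univ.filter (· ∉ Set.range c) = (Finset.univ.image c)ᶜ := by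
      ext
      simp
    rw [Finset.sum_boole, hcompl, Finset.card_compl, Finset.card_image_of_injective _ hc]
    simp [Nat.cast_sub hmn]
  rw [← (Fin.insertNthEquiv (fun _ => Fin n) l).sum_comp, Fintype.sum_prod_type, Finset.sum_comm,
    Finset.mul_sum]
  refine Finset.sum_congr rfl fun c _ => ?_
  have hj (a : Fin n) : Fin.insertNthEquiv (fun _ => Fin n) l (a, c) = Fin.insertNth l a c := rfl
  simp only [hj, Fin.insertNth_injective_iff, Fin.insertNth_comp_succAbove]
  by_cases hc : Function.Injective c
  · rw [← hcount c hc, Finset.sum_mul]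
    simp [hc]
  · simp [hc, hD c hc]

theorem prod_natCast_sub_val (r : ℕ) : ∏ k : Fin r, ((r : ℝ) - k) = r.factorial := by
  rw [Fin.prod_univ_eq_prod_range (fun k => (r : ℝ) - k), ← Nat.descFactorial_self,
    Nat.descFactorial_eq_prod_range, Nat.cast_prod]
  exact Finset.prod_congr rfl fun k hk => by rw [Nat.cast_sub (Finset.mem_range.mp hk).le]

section FrobeniusNorm

variable {m n : ℕ}

theorem frobSq_nonneg (A : Matrix (Fin m) (Fin n) ℝ) : 0 ≤ frobSq A := by
  unfold frobSq
  positivity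

theorem frobSq_smul (c : ℝ) (A : Matrix (Fin m) (Fin n) ℝ) : frobSq (c • A) = c ^ 2 * frobSq A := by
  simp [frobSq, Finset.mul_sum, mul_pow]

theorem frobSq_eq_trace (A : Matrix (Fin m) (Fin n) ℝ) : frobSq A = trace (Aᵀ * A) := by
  simp only [frobSq, trace, diag_apply, mul_apply, transpose_apply, sq]
  exact Finset.sum_comm

theorem l2_opNorm_sq_le_frobSq (A : Matrix (Fin m) (Fin n) ℝ) : ‖A‖ ^ 2 ≤ frobSq A := by
  suffices ‖A‖ ≤ √(frobSq A) from
    (pow_le_pow_left₀ (norm_nonneg _) this 2).trans_eq (Real.sq_sqrt (frobSq_nonneg A))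
  refine ContinuousLinearMap.opNorm_le_bound _ (Real.sqrt_nonneg _) fun x => ?_
  rw [← Real.sqrt_sq (norm_nonneg x), ← Real.sqrt_mul (frobSq_nonneg A),
    Real.le_sqrt (norm_nonneg _) (mul_nonneg (frobSq_nonneg A) (sq_nonneg _))]
  simp only [EuclideanSpace.real_norm_sq_eq, frobSq, Finset.sum_mul]
  refine Finset.sum_le_sum fun i _ => ?_
  simpa [mulVec, dotProduct, Finset.sum_mul] using
    Finset.sum_mul_sq_le_sq_mul_sq Finset.univ (A i) x

theorem frobSq_adjugate (A : Matrix (Fin (m + 1)) (Fin (m + 1)) ℝ) :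
    frobSq A.adjugate = ∑ l : Fin (m + 1), ((Aᵀ * A).submatrix l.succAbove l.succAbove).det := by
  have h : (Aᵀ * A).adjugate = A.adjugate * A.adjugateᵀ := by
    rw [adjugate_mul_distrib, adjugate_transpose]
  rw [frobSq_eq_trace, trace_mul_comm, ← h, trace]
  refine Finset.sum_congr rfl fun l _ => ?_
  rw [diag_apply, adjugate_fin_succ_eq_det_submatrix, (Even.add_self (l : ℕ)).neg_one_pow, one_mul]

/-- `N = M⁻¹` expands lengths, so `NᵀN - 1 = BᵀB` is positive semidefinite, and
`‖BᵀB‖ ≤ tr (BᵀB)`. -/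
theorem l2_opNorm_inv_sq_le_frobSq_sub {M : Matrix (Fin n) (Fin n) ℝ} (hM : ‖M‖ ≤ 1)
    (hdet : IsUnit M.det) : ‖M⁻¹‖ ^ 2 ≤ frobSq M⁻¹ - (n - 1) := by
  set N := M⁻¹
  have hexpand (x : Fin n → ℝ) : x = M *ᵥ (N *ᵥ x) := by
    rw [mulVec_mulVec, mul_nonsing_inv M hdet, one_mulVec]
  have hG : (Nᵀ * N - 1).PosSemidef := by
    refine .of_dotProduct_mulVec_nonneg (by simp [IsHermitian, transpose_sub]) fun x => ?_
    have hx := (mulVec_dotProduct_mulVec_self_le M (N *ᵥ x)).trans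
      (mul_le_of_le_one_left (by simp [dotProduct, ← sq]; positivity)
        (pow_le_one₀ (norm_nonneg M) hM))
    rw [← hexpand] at hx
    simp only [star_trivial, sub_mulVec, one_mulVec, dotProduct_sub, ← mulVec_mulVec,
      mulVec_transpose, dotProduct_mulVec] at hx ⊢
    rw [dotProduct_comm ((N *ᵥ x) ᵥ* N)] at hx
    linarith
  obtain ⟨B, hB⟩ := hG.exists_eq_transpose_mul_self
  calc ‖N‖ ^ 2 = ‖Nᵀ * N‖ := by
        rw [sq, ← l2_opNorm_conjTranspose_mul_self, conjTranspose_eq_transpose_of_trivial]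
    _ = ‖1 + Bᵀ * B‖ := by rw [← hB, add_sub_cancel]
    _ ≤ 1 + ‖B‖ ^ 2 := by
        refine (norm_add_le _ _).trans (add_le_add l2_opNorm_one_le ?_)
        rw [sq, ← l2_opNorm_conjTranspose_mul_self, conjTranspose_eq_transpose_of_trivial]
    _ ≤ 1 + frobSq B := by grw [l2_opNorm_sq_le_frobSq]
    _ = frobSq N - (n - 1) := by
        rw [frobSq_eq_trace B, ← hB, trace_sub, trace_one, ← frobSq_eq_trace, Fintype.card_fin]
        ring

end FrobeniusNorm

section ColumnSelection

variable {n r : ℕ}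

theorem EJ_eq_submatrix_one (j : Fin r → Fin n) :
    EJ j = (1 : Matrix (Fin n) (Fin n) ℝ).submatrix id j := by
  ext i l
  simp [EJ, one_apply]

theorem mul_EJ {m : ℕ} (M : Matrix (Fin m) (Fin n) ℝ) (j : Fin r → Fin n) :
    M * EJ j = M.submatrix id j := by
  ext i l
  simp [EJ, mul_apply]

theorem EJ_transpose_mul_self {j : Fin r → Fin n} (hj : Function.Injective j) :
    (EJ j)ᵀ * EJ j = 1 := by
  rw [mul_EJ, EJ_eq_submatrix_one, transpose_submatrix, transpose_one, submatrix_submatrix,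
    Function.id_comp, Function.comp_id, submatrix_one j hj]

theorem injective_of_det_mul_EJ_ne_zero (M : Matrix (Fin r) (Fin n) ℝ) {j : Fin r → Fin n}
    (h : (M * EJ j).det ≠ 0) : Function.Injective j := by
  contrapose! h
  rw [mul_EJ, ← det_transpose, transpose_submatrix]
  exact det_submatrix_eq_zero_of_not_injective _ h _

theorem transpose_mul_self_transpose_mul_EJ (V : Matrix (Fin n) (Fin r) ℝ) (j : Fin r → Fin n) :
    (Vᵀ * EJ j)ᵀ * (Vᵀ * EJ j) = (V * Vᵀ).submatrix j j := by
  rw [mul_EJ, transpose_submatrix, transpose_transpose,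
    submatrix_mul _ _ j id j Function.bijective_id]

theorem l2_opNorm_transpose_mul_EJ_le_one {V : Matrix (Fin n) (Fin r) ℝ} (hV : Vᵀ * V = 1)
    {j : Fin r → Fin n} (hj : Function.Injective j) : ‖Vᵀ * EJ j‖ ≤ 1 := by
  have hVt : ‖Vᵀ‖ ≤ 1 := by
    rw [← conjTranspose_eq_transpose_of_trivial, l2_opNorm_conjTranspose]
    exact l2_opNorm_le_one_of_transpose_mul_self_eq_one hV
  calc ‖Vᵀ * EJ j‖ ≤ ‖Vᵀ‖ * ‖EJ j‖ := l2_opNorm_mul _ _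
    _ ≤ 1 := mul_le_one₀ hVt (norm_nonneg _)
        (l2_opNorm_le_one_of_transpose_mul_self_eq_one (EJ_transpose_mul_self hj))

theorem sum_ite_injective_frobSq_adjugate {m : ℕ} {V : Matrix (Fin n) (Fin (m + 1)) ℝ}
    (hV : Vᵀ * V = 1) :
    ∑ j : Fin (m + 1) → Fin n,
        (if Function.Injective j then frobSq (Vᵀ * EJ j).adjugate else 0)
      = (m + 1) * ((n : ℝ) - m) * (m + 1).factorial := by
  calc ∑ j : Fin (m + 1) → Fin n,
        (if Function.Injective j then frobSq (Vᵀ * EJ j).adjugate else 0)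
      = ∑ l : Fin (m + 1), ∑ j : Fin (m + 1) → Fin n, (if Function.Injective j then
          ((V * Vᵀ).submatrix (j ∘ l.succAbove) (j ∘ l.succAbove)).det else 0) := by
        rw [Finset.sum_comm]
        refine Finset.sum_congr rfl fun j _ => ?_
        split_ifs
        · simp only [frobSq_adjugate, transpose_mul_self_transpose_mul_EJ, submatrix_submatrix]
        · simp
    _ = ∑ l : Fin (m + 1), ((n : ℝ) - m) * ∑ c : Fin m → Fin n, ((V * Vᵀ).submatrix c c).det :=
        Finset.sum_congr rfl fun l _ => sum_ite_injective_comp_succAbove l _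
          fun c hc => det_submatrix_eq_zero_of_not_injective _ hc c
    _ = (m + 1) * ((n : ℝ) - m) * (m + 1).factorial := by
        rw [sum_det_submatrix_mul_transpose V hV, Fintype.card_embedding_eq]
        simp only [Fintype.card_fin, Finset.sum_const, Finset.card_univ, nsmul_eq_mul]
        rw [← Nat.factorial_mul_descFactorial (Nat.le_succ m)]
        simp [mul_assoc]

end ColumnSelection

section ARP

variable {n r : ℕ}

/-- When `W i = 0` the coefficient is `0 / 0 = 0`, matching the convention built into `arpStep`. -/
theorem arpStep_apply (W : Matrix (Fin n) (Fin r) ℝ) (i a : Fin n) :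
    arpStep W i a = W a - ((W a ⬝ᵥ W i) / (W i ⬝ᵥ W i)) • W i := by
  unfold arpStep
  split_ifs with h
  · simp [h]
  · rw [Matrix.mul_sub, Matrix.mul_one]
    ext c
    simp only [Matrix.sub_apply, Pi.sub_apply, Pi.smul_apply, Matrix.mul_smul, Matrix.smul_apply,
      mul_apply, of_apply, smul_eq_mul, dotProduct, sq, Finset.sum_mul, Finset.mul_sum,
      div_eq_inv_mul]
    congr 1
    exact Finset.sum_congr rfl fun _ _ => by ring

theorem arpStep_dotProduct_self (W : Matrix (Fin n) (Fin r) ℝ) (i a : Fin n) :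
    arpStep W i a ⬝ᵥ W i = 0 := by
  rw [arpStep_apply, sub_dotProduct, smul_dotProduct, smul_eq_mul]
  by_cases h : W i ⬝ᵥ W i = 0
  · simp [dotProduct_self_eq_zero.mp h]
  · rw [div_mul_cancel₀ _ h, sub_self]

theorem arpStep_dotProduct_eq_zero (W : Matrix (Fin n) (Fin r) ℝ) {i a : Fin n}
    {u : Fin r → ℝ} (ha : W a ⬝ᵥ u = 0) (hi : W i ⬝ᵥ u = 0) : arpStep W i a ⬝ᵥ u = 0 := by
  simp [arpStep_apply, sub_dotProduct, smul_dotProduct, ha, hi]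

variable (V : Matrix (Fin n) (Fin r) ℝ) (j : Fin r → Fin n)

/-- `arpPivot V j k` is the paper's `v_{k+1}`. -/
noncomputable def arpPivot (k : Fin r) : Fin r → ℝ := arpIter V j k (j k)

theorem arpIter_succ {m : ℕ} (hm : m < r) :
    arpIter V j (m + 1) = arpStep (arpIter V j m) (j ⟨m, hm⟩) := by
  rw [arpIter, dif_pos hm]

theorem arpIter_dotProduct_arpPivot {m : ℕ} (hm : m ≤ r) {k : Fin r} (hk : k < m) (i : Fin n) :
    arpIter V j m i ⬝ᵥ arpPivot V j k = 0 := by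
  induction m generalizing i with
  | zero => omega
  | succ m ih =>
    rw [arpIter_succ V j (by omega)]
    rcases Nat.lt_succ_iff_lt_or_eq.mp hk with hk | rfl
    · exact arpStep_dotProduct_eq_zero _ (ih (by omega) hk i) (ih (by omega) hk _)
    · exact arpStep_dotProduct_self _ _ _

theorem exists_eq_arpIter_add_sum_arpPivot {m : ℕ} (hm : m ≤ r) (i : Fin n) :
    ∃ g : Fin r → ℝ, (∀ k : Fin r, m ≤ k → g k = 0) ∧
      V i = arpIter V j m i + ∑ k, g k • arpPivot V j k := by
  induction m with
  | zero => exact ⟨0, fun _ _ => rfl, by simp [arpIter]⟩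
  | succ m ih =>
    obtain ⟨g, hg0, hg⟩ := ih (by omega)
    set k₀ : Fin r := ⟨m, by omega⟩
    set W := arpIter V j m
    refine ⟨g + Pi.single k₀ ((W i ⬝ᵥ W (j k₀)) / (W (j k₀) ⬝ᵥ W (j k₀))), fun k hk => ?_, ?_⟩
    · have hne : k ≠ k₀ := fun h => by simp [h, k₀] at hk
      simp [hg0 k (by omega), hne]
    · rw [arpIter_succ V j (by omega), arpStep_apply, hg]
      simp only [Pi.add_apply, add_smul, Finset.sum_add_distrib, Pi.single_apply, ite_smul,
        zero_smul, Finset.sum_ite_eq', Finset.mem_univ, if_true]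
      simp only [arpPivot, W, k₀]
      abel

theorem arpWeight_eq_det_sq_div_factorial :
    arpWeight V j = (Vᵀ * EJ j).det ^ 2 / r.factorial := by
  have hdet : (V.submatrix j id).det = (of (arpPivot V j)).det :=
    det_eq_of_rows_eq_add_sum_smul_lt fun k =>
      exists_eq_arpIter_add_sum_arpPivot V j k.is_lt.le (j k)
  have horth : Pairwise fun k k' => arpPivot V j k ⬝ᵥ arpPivot V j k' = 0 := by
    intro k k' hne
    rcases hne.lt_or_gt with hlt | hlt
    · rw [dotProduct_comm]
      exact arpIter_dotProduct_arpPivot V j k'.is_lt.le hlt _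
    · exact arpIter_dotProduct_arpPivot V j k.is_lt.le hlt _
  rw [mul_EJ, ← transpose_submatrix, det_transpose, hdet,
    det_sq_eq_prod_dotProduct_self (W := of (arpPivot V j)) horth, arpWeight,
    Finset.prod_div_distrib, prod_natCast_sub_val]
  simp [arpPivot, dotProduct, sq]

theorem arpWeight_nonneg : 0 ≤ arpWeight V j := by
  rw [arpWeight_eq_det_sq_div_factorial]
  positivity

variable {V}

theorem sum_arpWeight (hV : Vᵀ * V = 1) : ∑ j : Fin r → Fin n, arpWeight V j = 1 := by
  have hdet (j : Fin r → Fin n) : (Vᵀ * EJ j).det ^ 2 = ((V * Vᵀ).submatrix j j).det := by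
    rw [← transpose_mul_self_transpose_mul_EJ, det_mul, det_transpose, sq]
  simp only [arpWeight_eq_det_sq_div_factorial, hdet, ← Finset.sum_div,
    sum_det_submatrix_mul_transpose V hV, Fintype.card_embedding_eq, Fintype.card_fin,
    Nat.descFactorial_self]
  exact div_self (Nat.cast_ne_zero.mpr (Nat.factorial_ne_zero r))

theorem sum_arpWeight_mul_frobSq_inv_le (hV : Vᵀ * V = 1) :
    ∑ j : Fin r → Fin n, arpWeight V j * frobSq (Vᵀ * EJ j)⁻¹ ≤ r * ((n : ℝ) - r + 1) := by
  have hterm (j : Fin r → Fin n) : arpWeight V j * frobSq (Vᵀ * EJ j)⁻¹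
      ≤ (if Function.Injective j then frobSq (Vᵀ * EJ j).adjugate else 0) / r.factorial := by
    rw [arpWeight_eq_det_sq_div_factorial]
    by_cases hdet : (Vᵀ * EJ j).det = 0
    · rw [hdet]
      split_ifs <;> simp [div_nonneg, frobSq_nonneg]
    · rw [if_pos (injective_of_det_mul_EJ_ne_zero _ hdet), inv_def, Ring.inverse_eq_inv',
        frobSq_smul]
      refine le_of_eq ?_
      field_simp
  rcases r with _ | m
  · simp [frobSq]
  · calc _ ≤ _ := Finset.sum_le_sum fun j _ => hterm j
      _ = _ := by
        rw [← Finset.sum_div, sum_ite_injective_frobSq_adjugate hV]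
        field_simp
        push_cast
        ring

end ARP

theorem specNorm_eq_l2_opNorm {r : ℕ} (M : Matrix (Fin r) (Fin r) ℝ) : specNorm M = ‖M‖ := rfl

theorem deim_expected_specNormSq_general {n r : ℕ}
    (V : Matrix (Fin n) (Fin r) ℝ) (hV : Vᵀ * V = 1) :
    ∑ j : Fin r → Fin n, arpWeight V j * specNorm ((Vᵀ * EJ j)⁻¹) ^ 2 ≤
      (r : ℝ) * ((n : ℝ) - (r : ℝ)) + 1 := by
  have hterm (j : Fin r → Fin n) : arpWeight V j * specNorm ((Vᵀ * EJ j)⁻¹) ^ 2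
      ≤ arpWeight V j * (frobSq (Vᵀ * EJ j)⁻¹ - (r - 1)) := by
    by_cases hdet : (Vᵀ * EJ j).det = 0
    · simp [arpWeight_eq_det_sq_div_factorial, hdet]
    · rw [specNorm_eq_l2_opNorm]
      refine mul_le_mul_of_nonneg_left ?_ (arpWeight_nonneg V j)
      exact l2_opNorm_inv_sq_le_frobSq_sub
        (l2_opNorm_transpose_mul_EJ_le_one hV (injective_of_det_mul_EJ_ne_zero _ hdet))
        (isUnit_iff_ne_zero.mpr hdet)
  calc ∑ j : Fin r → Fin n, arpWeight V j * specNorm ((Vᵀ * EJ j)⁻¹) ^ 2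
      ≤ ∑ j : Fin r → Fin n, arpWeight V j * (frobSq (Vᵀ * EJ j)⁻¹ - (r - 1)) :=
        Finset.sum_le_sum fun j _ => hterm j
    _ = ∑ j : Fin r → Fin n, arpWeight V j * frobSq (Vᵀ * EJ j)⁻¹
          - (r - 1) * ∑ j : Fin r → Fin n, arpWeight V j := by
        simp only [mul_sub, Finset.sum_sub_distrib, Finset.mul_sum, mul_comm]
    _ ≤ r * ((n : ℝ) - r + 1) - (r - 1) * 1 := by
        rw [sum_arpWeight hV]
        gcongr
        exact sum_arpWeight_mul_frobSq_inv_le hV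
    _ = r * ((n : ℝ) - r) + 1 := by ring

/-- Corollary 3.1, spectral part:
`E[‖(E_Iᵀ V)⁻¹‖₂²] ≤ r(n − r) + 1` for the ARP index set. -/
theorem deim_expected_specNormSq {n r : ℕ} (hr : 1 ≤ r) (hrn : r ≤ n)
    (V : Matrix (Fin n) (Fin r) ℝ) (hV : Vᵀ * V = 1) :
    ∑ j : Fin r → Fin n, arpWeight V j * specNorm ((Vᵀ * EJ j)⁻¹) ^ 2 ≤
      (r : ℝ) * ((n : ℝ) - (r : ℝ)) + 1 :=
  deim_expected_specNormSq_general V hV
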